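/- For every real number x, the function x ↦ log(1 + x + x²/2) satisfies the two-sided bound −x⁴/38 ≤ log(1 + x + x²/2) − x + x³/6 ≤ x⁴/6. (Note that 1 + x + x²/2 > 0 for all real x, so the logarithm is well defined.) -/

import Mathlib

/-!
Write `R x = log (1 + x + x²/2) - x + x³/6` and `q x = 1 + x + x²/2 > 0`. Then `R 0 = 0` and
`R' x = (1 + x)/q - 1 + x²/2 = x³ (x + 2) / (4 q)`. Hence `x⁴/38 + R` and `x⁴/6 - R` have
derivatives `x³ (4x² + 27x + 46) / (76 q)` and `x³ (4x² + 5x + 2) / (12 q)`; both quadratic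
factors have negative discriminant, so these functions decrease on `(-∞, 0]`, increase on
`[0, ∞)`, and are therefore nonnegative.
-/

open Real Set

theorem le_of_hasDerivAt_of_mul_sub_nonneg {f f' : ℝ → ℝ} {a : ℝ}
    (hf : ∀ y, HasDerivAt f (f' y) y) (hsign : ∀ y, 0 ≤ (y - a) * f' y) (x : ℝ) :
    f a ≤ f x := by
  have hcont : Continuous f := continuous_iff_continuousAt.2 fun y ↦ (hf y).continuousAt
  rcases le_total a x with hax | hxa
  · refine monotoneOn_of_hasDerivWithinAt_nonneg (convex_Ici a) hcont.continuousOn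
      (fun y _ ↦ (hf y).hasDerivWithinAt) (fun y hy ↦ ?_) self_mem_Ici hax hax
    rw [interior_Ici] at hy
    exact nonneg_of_mul_nonneg_right (hsign y) (sub_pos.2 hy)
  · refine antitoneOn_of_hasDerivWithinAt_nonpos (convex_Iic a) hcont.continuousOn
      (fun y _ ↦ (hf y).hasDerivWithinAt) (fun y hy ↦ ?_) hxa self_mem_Iic hxa
    rw [interior_Iic] at hy
    exact nonpos_of_mul_nonneg_right (hsign y) (sub_neg.2 hy)

theorem le_of_hasDerivAt_eq_pow_three_mul {f g : ℝ → ℝ}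
    (hf : ∀ y, HasDerivAt f (y ^ 3 * g y) y) (hg : ∀ y, 0 ≤ g y) (x : ℝ) : f 0 ≤ f x :=
  le_of_hasDerivAt_of_mul_sub_nonneg hf (fun y ↦ by
    rw [sub_zero, ← mul_assoc, ← pow_succ']
    exact mul_nonneg (Even.pow_nonneg (by decide) y) (hg y)) x

theorem one_add_add_sq_div_two_pos (x : ℝ) : 0 < 1 + x + x ^ 2 / 2 := by
  nlinarith [sq_nonneg (x + 1)]

noncomputable def logQuadRemainder (x : ℝ) : ℝ :=
  log (1 + x + x ^ 2 / 2) - x + x ^ 3 / 6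

theorem logQuadRemainder_zero : logQuadRemainder 0 = 0 := by
  simp [logQuadRemainder]

theorem hasDerivAt_logQuadRemainder (x : ℝ) :
    HasDerivAt logQuadRemainder (x ^ 3 * (x + 2) / (4 * (1 + x + x ^ 2 / 2))) x := by
  have hquad : HasDerivAt (fun t : ℝ ↦ 1 + t + t ^ 2 / 2) (1 + x) x :=
    (((hasDerivAt_id' x).const_add 1).fun_add ((hasDerivAt_pow 2 x).div_const 2)).congr_deriv
      (by simp)
  have hq := one_add_add_sq_div_two_pos x
  refine (((hquad.log hq.ne').fun_sub (hasDerivAt_id' x)).fun_add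
    ((hasDerivAt_pow 3 x).div_const 6)).congr_deriv ?_
  -- Left as `1 + x + x ^ 2 / 2`, `field_simp` would rewrite `q` into a form it cannot see is nonzero.
  generalize hq_def : 1 + x + x ^ 2 / 2 = q at hq ⊢
  field_simp
  rw [← hq_def]
  push_cast
  ring

theorem neg_div_le_logQuadRemainder (x : ℝ) : -x ^ 4 / 38 ≤ logQuadRemainder x := by
  have hderiv (y : ℝ) : HasDerivAt (fun t ↦ logQuadRemainder t + t ^ 4 / 38)
      (y ^ 3 * ((4 * y ^ 2 + 27 * y + 46) / (76 * (1 + y + y ^ 2 / 2)))) y := by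
    refine ((hasDerivAt_logQuadRemainder y).fun_add
      ((hasDerivAt_pow 4 y).div_const 38)).congr_deriv ?_
    have hq := one_add_add_sq_div_two_pos y
    generalize hq_def : 1 + y + y ^ 2 / 2 = q at hq ⊢
    field_simp
    rw [← hq_def]
    push_cast
    ring
  have hmin := le_of_hasDerivAt_eq_pow_three_mul hderiv (fun y ↦ div_nonneg
    (by nlinarith [sq_nonneg (y + 27 / 8)]) (by linarith [one_add_add_sq_div_two_pos y])) x
  simp only [logQuadRemainder_zero] at hmin
  linarith

theorem logQuadRemainder_le (x : ℝ) : logQuadRemainder x ≤ x ^ 4 / 6 := by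
  have hderiv (y : ℝ) : HasDerivAt (fun t ↦ t ^ 4 / 6 - logQuadRemainder t)
      (y ^ 3 * ((4 * y ^ 2 + 5 * y + 2) / (12 * (1 + y + y ^ 2 / 2)))) y := by
    refine (((hasDerivAt_pow 4 y).div_const 6).fun_sub
      (hasDerivAt_logQuadRemainder y)).congr_deriv ?_
    have hq := one_add_add_sq_div_two_pos y
    generalize hq_def : 1 + y + y ^ 2 / 2 = q at hq ⊢
    field_simp
    rw [← hq_def]
    push_cast
    ring
  have hmin := le_of_hasDerivAt_eq_pow_three_mul hderiv (fun y ↦ div_nonneg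
    (by nlinarith [sq_nonneg (y + 5 / 8)]) (by linarith [one_add_add_sq_div_two_pos y])) x
  simp only [logQuadRemainder_zero] at hmin
  linarith

theorem log_quad_bounds (x : ℝ) :
    -x ^ 4 / 38 ≤ Real.log (1 + x + x ^ 2 / 2) - x + x ^ 3 / 6 ∧
    Real.log (1 + x + x ^ 2 / 2) - x + x ^ 3 / 6 ≤ x ^ 4 / 6 :=
  ⟨neg_div_le_logQuadRemainder x, logQuadRemainder_le x⟩
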